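/- arXiv:cs/0602013 — 8 statements merged into one kernel-verified Lean document; each statement's English description precedes it below -/
import Mathlib

section
/- Let G be a finite connected simple graph and let x, y be vertices of G. Then x ~ y (i.e., x and y lie in the same edge-biconnected component) if and only if there is a closed walk in G with no repeated edges (a closed trail) that passes through both x and y. -/
/-!
Both sides say that `x` and `y` are 2-edge-reachable. A closed trail through `x` and `y` splits
into two edge-disjoint walks from `x` to `y`, and no edge lies on both. Conversely, the vertices of
a path between 2-edge-reachable vertices are pairwise 2-edge-reachable, so each edge of the path
lies on a cycle, and it remains to see that lying on a common closed trail is transitive. Given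
closed trails `T ∋ x, z` and `c ∋ z, y`, split `c` at `y` and `z` into two edge-disjoint arcs from
`y` to `z`, and follow each arc from `y` only until it first meets `T`, at `a` and at `b`. These
two pieces meet `T` in a single vertex, hence avoid its edges, so closing them up by the arc of `T`
from `a` to `b` through `x` gives the required trail.
-/

namespace SimpleGraph

variable {V : Type*} {G : SimpleGraph V} {u v x y z a b : V}

def OnCommonClosedTrail (G : SimpleGraph V) (x y : V) : Prop :=
  ∃ (u : V) (c : G.Walk u u), c.IsTrail ∧ x ∈ c.support ∧ y ∈ c.support

namespace Walk

lemma exists_prefix_first_mem (S : Set V) :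
    ∀ {u v : V} (p : G.Walk u v), v ∈ S →
      ∃ a ∈ S, ∃ q : G.Walk u a, q.edges <+: p.edges ∧ ∀ c ∈ q.support, c ∈ S → c = a
  | u, _, nil, hv => ⟨u, hv, nil, by simp, by simp⟩
  | u, _, cons h p, hv => by
    by_cases hu : u ∈ S
    · exact ⟨u, hu, nil, by simp, by simp⟩
    obtain ⟨a, ha, q, hqp, hq⟩ := exists_prefix_first_mem S p hv
    refine ⟨a, ha, cons h q, by simpa using hqp, ?_⟩
    rintro c hc hcS
    rcases List.mem_cons.1 (support_cons h q ▸ hc) with rfl | hc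
    · exact absurd hcS hu
    · exact hq c hc hcS

lemma disjoint_edges_of_forall_mem_support_eq {u' v' : V} {p : G.Walk u v} {q : G.Walk u' v'}
    (h : ∀ c ∈ p.support, c ∈ q.support → c = a) : p.edges.Disjoint q.edges := by
  intro e hp hq
  induction e with
  | _ c d =>
    have hc := h c (p.fst_mem_support_of_mem_edges hp) (q.fst_mem_support_of_mem_edges hq)
    have hd := h d (p.snd_mem_support_of_mem_edges hp) (q.snd_mem_support_of_mem_edges hq)
    exact (q.adj_of_mem_edges hq).ne (hc.trans hd.symm)

lemma IsTrail.exists_isTrail_mem_support {c : G.Walk u u} (hc : c.IsTrail)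
    (ha : a ∈ c.support) (hb : b ∈ c.support) (hx : x ∈ c.support) :
    ∃ p : G.Walk a b, p.IsTrail ∧ x ∈ p.support ∧ p.edges ⊆ c.edges := by
  classical
  set c' := c.rotate a ha
  have hb' : b ∈ c'.support := (c.mem_support_rotate_iff a ha).2 hb
  have hc' : c'.IsTrail := (isTrail_rotate ha).2 hc
  have hc'c : c'.edges ⊆ c.edges := (c.rotate_edges a ha).perm.subset
  have hx' : x ∈ (c'.takeUntil b hb').support ∨ x ∈ (c'.dropUntil b hb').support := by
    rw [← mem_support_append_iff, take_spec]
    exact (c.mem_support_rotate_iff a ha).2 hx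
  rcases hx' with hx' | hx'
  · exact ⟨_, hc'.takeUntil hb', hx',
      List.Subset.trans (c'.edges_takeUntil_subset_edges hb') hc'c⟩
  · refine ⟨_, (hc'.dropUntil hb').reverse _, by simpa using hx', ?_⟩
    simpa using List.Subset.trans (c'.edges_dropUntil_subset_edges hb') hc'c

end Walk

namespace OnCommonClosedTrail

lemma refl (x : V) : G.OnCommonClosedTrail x x :=
  ⟨x, .nil, by simp, by simp, by simp⟩

lemma symm (h : G.OnCommonClosedTrail x y) : G.OnCommonClosedTrail y x :=
  let ⟨u, c, hc, hx, hy⟩ := h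
  ⟨u, c, hc, hy, hx⟩

lemma exists_isTrail (h : G.OnCommonClosedTrail x y) :
    ∃ c : G.Walk x x, c.IsTrail ∧ y ∈ c.support := by
  classical
  obtain ⟨u, c, hc, hx, hy⟩ := h
  exact ⟨c.rotate x hx, (Walk.isTrail_rotate hx).2 hc, (c.mem_support_rotate_iff x hx).2 hy⟩

lemma trans (h₁ : G.OnCommonClosedTrail x z) (h₂ : G.OnCommonClosedTrail z y) :
    G.OnCommonClosedTrail x y := by
  classical
  obtain ⟨u, T, hT, hxT, hzT⟩ := h₁
  obtain ⟨c, hc, hzc⟩ := h₂.symm.exists_isTrail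
  have hdisj := hc.disjoint_edges_takeUntil_dropUntil hzc
  obtain ⟨a, haT, p₁, hp₁c, hp₁T⟩ :=
    (c.takeUntil z hzc).exists_prefix_first_mem {v | v ∈ T.support} hzT
  obtain ⟨b, hbT, p₂, hp₂c, hp₂T⟩ :=
    (c.dropUntil z hzc).reverse.exists_prefix_first_mem {v | v ∈ T.support} hzT
  obtain ⟨q, hq, hxq, hqT⟩ := hT.exists_isTrail_mem_support haT hbT hxT
  have hp₁ : p₁.IsTrail := ⟨(hc.takeUntil hzc).edges_nodup.sublist hp₁c.sublist⟩
  have hp₂ : p₂.IsTrail := ⟨((hc.dropUntil hzc).reverse _).edges_nodup.sublist hp₂c.sublist⟩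
  have hp₁q : p₁.edges.Disjoint q.edges :=
    List.disjoint_of_subset_right hqT (Walk.disjoint_edges_of_forall_mem_support_eq hp₁T)
  have hp₂q : p₂.edges.Disjoint q.edges :=
    List.disjoint_of_subset_right hqT (Walk.disjoint_edges_of_forall_mem_support_eq hp₂T)
  have hp₁p₂ : p₁.edges.Disjoint p₂.edges :=
    List.disjoint_of_subset_left hp₁c.subset <|
      List.disjoint_of_subset_right (by simpa using hp₂c.subset) hdisj
  refine ⟨y, p₁.append (q.append p₂.reverse), ?_, by simp [hxq], by simp⟩
  simp only [Walk.isTrail_append, Walk.reverse_isTrail_iff, Walk.edges_append, Walk.edges_reverse,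
    List.disjoint_append_right, List.disjoint_reverse_right]
  exact ⟨hp₁, ⟨hq, hp₂, hp₂q.symm⟩, hp₁q, hp₁p₂⟩

end OnCommonClosedTrail

lemma onCommonClosedTrail_of_adj (h : G.Adj x y)
    (hxy : (G.deleteEdges {s(x, y)}).Reachable x y) : G.OnCommonClosedTrail x y := by
  obtain ⟨u, c, hc, he⟩ := adj_and_reachable_delete_edges_iff_exists_cycle.1 ⟨h, hxy⟩
  exact ⟨u, c, hc.isTrail, c.fst_mem_support_of_mem_edges he, c.snd_mem_support_of_mem_edges he⟩

lemma Walk.onCommonClosedTrail_of_isEdgeReachable_two :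
    ∀ {x y : V} (p : G.Walk x y),
      (∀ a ∈ p.support, ∀ b ∈ p.support, G.IsEdgeReachable 2 a b) → G.OnCommonClosedTrail x y
  | x, _, nil, _ => .refl x
  | _, _, cons h p, H =>
    (onCommonClosedTrail_of_adj h (isEdgeReachable_two.1 (H _ (by simp) _ (by simp)) _)).trans
      (p.onCommonClosedTrail_of_isEdgeReachable_two fun a ha b hb ↦
        H a (by simp [ha]) b (by simp [hb]))

theorem isEdgeReachable_two_iff_onCommonClosedTrail :
    G.IsEdgeReachable 2 x y ↔ G.OnCommonClosedTrail x y := by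
  refine ⟨fun h ↦ ?_, fun ⟨_, c, hc, hx, hy⟩ ↦ hc.isEdgeReachable_two hx hy⟩
  obtain ⟨p, hp⟩ := (h.reachable two_ne_zero).exists_isPath
  exact p.onCommonClosedTrail_of_isEdgeReachable_two fun a ha b hb ↦
    hp.isTrail.isEdgeReachable_two_of_isEdgeReachable_two h ha hb

lemma isEdgeReachable_two_iff_forall_mem_edgeSet (h : G.Reachable x y) :
    G.IsEdgeReachable 2 x y ↔ ∀ e ∈ G.edgeSet, (G.deleteEdges {e}).Reachable x y := by
  refine isEdgeReachable_two.trans ⟨fun H e _ ↦ H e, fun H e ↦ ?_⟩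
  by_cases he : e ∈ G.edgeSet
  · exact H e he
  · rwa [deleteEdges_eq_self.2 (Set.disjoint_singleton_right.2 he)]

end SimpleGraph

theorem same_component_iff_closed_trail_general {V : Type*}
    (G : SimpleGraph V) (hG : G.Connected) (x y : V) :
    (∀ e ∈ G.edgeSet, (G.deleteEdges {e}).Reachable x y) ↔
    ∃ (u : V) (w : G.Walk u u), w.IsTrail ∧ x ∈ w.support ∧ y ∈ w.support :=
  (SimpleGraph.isEdgeReachable_two_iff_forall_mem_edgeSet (hG.preconnected x y)).symm.trans
    SimpleGraph.isEdgeReachable_two_iff_onCommonClosedTrail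

/-- In a finite connected simple graph `G`, vertices `x` and `y`
satisfy `x ~ y` (they remain connected after deletion of any single edge) iff some
closed trail (closed walk with no repeated edges) of `G` passes through both `x`
and `y`. -/
theorem same_component_iff_closed_trail {V : Type*} [Fintype V]
    (G : SimpleGraph V) (hG : G.Connected) (x y : V) :
    (∀ e ∈ G.edgeSet, (G.deleteEdges {e}).Reachable x y) ↔
    ∃ (u : V) (w : G.Walk u u), w.IsTrail ∧ x ∈ w.support ∧ y ∈ w.support :=
  same_component_iff_closed_trail_general G hG x y
end

section
/- Let G be a finite connected simple graph and let T be a spanning tree of G. If u and v are vertices with u ~ v, then the unique path from u to v in T contains no bridge of G. Consequently, deleting all bridges of G from T yields a forest whose trees are spanning trees of the edge-biconnected components of G. -/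
open SimpleGraph

private lemma reach_end_or {V : Type*} (H : SimpleGraph V) (a b : V) {x y : V}
    (w : H.Walk x y) :
    (H.deleteEdges {s(a,b)}).Reachable x y ∨
    (H.deleteEdges {s(a,b)}).Reachable x a ∨
    (H.deleteEdges {s(a,b)}).Reachable x b := by
  induction w with
  | nil => exact Or.inl (Reachable.refl _)
  | @cons x z y hadj w ih =>
    by_cases he : s(x,z) = s(a,b)
    · rw [Sym2.eq_iff] at he
      rcases he with ⟨rfl, rfl⟩ | ⟨rfl, rfl⟩
      · exact Or.inr (Or.inl (Reachable.refl _))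
      · exact Or.inr (Or.inr (Reachable.refl _))
    · have hadj' : (H.deleteEdges {s(a,b)}).Adj x z := by
        rw [deleteEdges_adj]
        exact ⟨hadj, by simpa using he⟩
      rcases ih with h | h | h
      · exact Or.inl (hadj'.reachable.trans h)
      · exact Or.inr (Or.inl (hadj'.reachable.trans h))
      · exact Or.inr (Or.inr (hadj'.reachable.trans h))

private lemma reach_ab {V : Type*} {H : SimpleGraph V} (hH : H.Connected) (a b : V) (x : V) :
    (H.deleteEdges {s(a,b)}).Reachable x a ∨ (H.deleteEdges {s(a,b)}).Reachable x b := by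
  obtain ⟨w⟩ := hH.preconnected x a
  rcases reach_end_or H a b w with h | h | h
  · exact Or.inl h
  · exact Or.inl h
  · exact Or.inr h

/-- Let `T` be a spanning tree of a finite connected simple
graph `G`.  If `u ~ v` (they remain connected after deleting any single edge of
`G`), then the unique `T`-path from `u` to `v` contains no bridge of `G` (an
edge `e` of `G` being a bridge when `G − e` is disconnected).  Consequently,
deleting all bridges of `G` from `T` yields a forest whose trees span exactly
the edge-biconnected components: two vertices are joined in the pruned tree iff
they are `~`-related. -/
theorem tree_path_avoids_bridges_and_spans_components {V : Type*} [Fintype V]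
    (G T : SimpleGraph V) (hG : G.Connected) (hTG : T ≤ G) (hT : T.IsTree) :
    (∀ u v : V, (∀ e ∈ G.edgeSet, (G.deleteEdges {e}).Reachable u v) →
      ∀ p : T.Walk u v, p.IsPath →
        ∀ e ∈ p.edges, (G.deleteEdges {e}).Connected) ∧
    (∀ u v : V,
      (T.deleteEdges {e | e ∈ G.edgeSet ∧ ¬(G.deleteEdges {e}).Connected}).Reachable u v ↔
      (∀ e ∈ G.edgeSet, (G.deleteEdges {e}).Reachable u v)) := by
  classical
  have hTconn := hT.isConnected
  -- monotonicity of delete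
  have hdel : ∀ e : Sym2 V, T.deleteEdges {e} ≤ G.deleteEdges {e} := by
    intro e x y hxy
    rw [deleteEdges_adj] at hxy ⊢
    exact ⟨hTG hxy.1, hxy.2⟩
  have part1 : ∀ u v : V, (∀ e ∈ G.edgeSet, (G.deleteEdges {e}).Reachable u v) →
      ∀ p : T.Walk u v, p.IsPath →
        ∀ e ∈ p.edges, (G.deleteEdges {e}).Connected := by
    intro u v huv p hp e he
    induction e using Sym2.ind with
    | _ a b =>
    have heT : s(a,b) ∈ T.edgeSet := p.edges_subset_edgeSet he
    have heG : s(a,b) ∈ G.edgeSet := by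
      rw [mem_edgeSet] at heT ⊢; exact hTG heT
    -- u and v are on opposite sides in T - e
    have opp : ((T.deleteEdges {s(a,b)}).Reachable u a ∧ (T.deleteEdges {s(a,b)}).Reachable v b)
        ∨ ((T.deleteEdges {s(a,b)}).Reachable u b ∧ (T.deleteEdges {s(a,b)}).Reachable v a) := by
      have same : ¬ (T.deleteEdges {s(a,b)}).Reachable u v := by
        intro ⟨w⟩
        have hsub : ∀ f ∈ w.edges, f ∈ T.edgeSet := by
          intro f hf
          have := w.edges_subset_edgeSet hf
          rw [edgeSet_deleteEdges] at this
          exact this.1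
        set w' : T.Walk u v := w.transfer T hsub with hw'
        have hw'e : s(a,b) ∉ w'.edges := by
          rw [hw', Walk.edges_transfer]
          intro hmem
          have := w.edges_subset_edgeSet hmem
          rw [edgeSet_deleteEdges] at this
          simp at this
        obtain ⟨q, hq, huniq⟩ := hT.existsUnique_path u v
        have h1 := huniq _ w'.bypass_isPath
        have h2 := huniq _ hp
        have : s(a,b) ∈ w'.bypass.edges := by rw [h1, ← h2]; exact he
        exact hw'e (w'.edges_bypass_subset this)
      rcases reach_ab hTconn a b u with hu | hu <;>
        rcases reach_ab hTconn a b v with hv | hv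
      · exact absurd (hu.trans hv.symm) same
      · exact Or.inl ⟨hu, hv⟩
      · exact Or.inr ⟨hu, hv⟩
      · exact absurd (hu.trans hv.symm) same
    have hab : (G.deleteEdges {s(a,b)}).Reachable a b := by
      have huvG := huv _ heG
      rcases opp with ⟨hu, hv⟩ | ⟨hu, hv⟩
      · exact ((hu.mono (hdel _)).symm.trans huvG).trans (hv.mono (hdel _))
      · exact ((hv.mono (hdel _)).symm.trans huvG.symm).trans (hu.mono (hdel _))
    rw [connected_iff]
    refine ⟨fun x y => ?_, hG.nonempty⟩
    have hx := reach_ab hTconn a b x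
    have hy := reach_ab hTconn a b y
    rcases hx with hx | hx <;> rcases hy with hy | hy
    · exact (hx.mono (hdel _)).trans (hy.mono (hdel _)).symm
    · exact ((hx.mono (hdel _)).trans hab).trans (hy.mono (hdel _)).symm
    · exact ((hx.mono (hdel _)).trans hab.symm).trans (hy.mono (hdel _)).symm
    · exact (hx.mono (hdel _)).trans (hy.mono (hdel _)).symm
  refine ⟨part1, fun u v => ⟨?_, ?_⟩⟩
  · intro hr e heG
    by_cases hc : (G.deleteEdges {e}).Connected
    · exact hc.preconnected u v
    · refine hr.mono ?_
      intro x y hxy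
      rw [deleteEdges_adj] at hxy ⊢
      obtain ⟨hTxy, hS⟩ := hxy
      refine ⟨hTG hTxy, ?_⟩
      simp only [Set.mem_setOf_eq, not_and, not_not] at hS
      intro hmem
      simp only [Set.mem_singleton_iff] at hmem
      subst hmem
      exact hc (hS heG)
  · intro h
    obtain ⟨w⟩ := hTconn.preconnected u v
    have hp := w.bypass_isPath
    have hb : ∀ e ∈ w.bypass.edges,
        e ∈ (T.deleteEdges {e | e ∈ G.edgeSet ∧ ¬(G.deleteEdges {e}).Connected}).edgeSet := by
      intro e he
      rw [edgeSet_deleteEdges]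
      refine ⟨w.bypass.edges_subset_edgeSet he, ?_⟩
      simp only [Set.mem_setOf_eq, not_and, not_not]
      intro _
      exact part1 u v h w.bypass hp e he
    exact ⟨w.bypass.transfer _ hb⟩
end

section
/- Let T be a finite tree on n vertices rooted at r with a preorder labeling ℓ, and let u_1, ..., u_k (k ≥ 1) be vertices. Let u_min be the vertex among u_1, ..., u_k of minimum label and u_max the one of maximum label. Then a vertex a is a common ancestor of all of u_1, ..., u_k if and only if a is a common ancestor of u_min and u_max. In particular, the least common ancestor of u_1, ..., u_k equals the least common ancestor of u_min and u_max. -/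
/-- In a tree `T` rooted at `r`, vertex `v` is an ancestor of `u` (equivalently,
`u` is a descendant of `v`) if `v` lies on the unique path in `T` from `r` to `u`.
Every vertex is an ancestor/descendant of itself. -/
def SimpleGraph.IsAncestor {V : Type*} (T : SimpleGraph V) (r v u : V) : Prop :=
  ∀ p : T.Walk r u, p.IsPath → v ∈ p.support

/-- Let `ℓ` be a preorder labeling of a finite rooted tree `T`
and `u₁, …, u_k` (`k ≥ 1`) vertices, with `u imin` of minimum label and `u imax`
of maximum label.  Then a vertex `a` is a common ancestor of all the `u i` iff
it is a common ancestor of `u imin` and `u imax`; in particular, the least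
common ancestor of `u₁, …, u_k` equals the least common ancestor of the pair
`u imin`, `u imax`. -/
theorem common_ancestor_iff_min_max {V : Type*} [Fintype V]
    (T : SimpleGraph V) (hT : T.IsTree) (r : V)
    (ℓ : V → ℕ) (hbij : Set.BijOn ℓ Set.univ (Set.Iio (Fintype.card V)))
    (hpre : ∀ v : V, ℓ '' {u | T.IsAncestor r v u} =
      Set.Ico (ℓ v) (ℓ v + Set.ncard {u | T.IsAncestor r v u}))
    (k : ℕ) (hk : 1 ≤ k) (u : Fin k → V)
    (imin imax : Fin k)
    (hmin : ∀ j : Fin k, ℓ (u imin) ≤ ℓ (u j))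
    (hmax : ∀ j : Fin k, ℓ (u j) ≤ ℓ (u imax)) :
    (∀ a : V, (∀ i : Fin k, T.IsAncestor r a (u i)) ↔
      (T.IsAncestor r a (u imin) ∧ T.IsAncestor r a (u imax))) ∧
    (∀ a : V,
      ((∀ i : Fin k, T.IsAncestor r a (u i)) ∧
        ∀ b : V, (∀ i : Fin k, T.IsAncestor r b (u i)) → T.IsAncestor r b a) ↔
      ((T.IsAncestor r a (u imin) ∧ T.IsAncestor r a (u imax)) ∧
        ∀ b : V, T.IsAncestor r b (u imin) → T.IsAncestor r b (u imax) →
          T.IsAncestor r b a)) := by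
  have key : ∀ a : V, (∀ i : Fin k, T.IsAncestor r a (u i)) ↔
      (T.IsAncestor r a (u imin) ∧ T.IsAncestor r a (u imax)) := by
    intro a
    constructor
    · intro h; exact ⟨h imin, h imax⟩
    · rintro ⟨h1, h2⟩ j
      have hmem1 : ℓ (u imin) ∈
          Set.Ico (ℓ a) (ℓ a + Set.ncard {w | T.IsAncestor r a w}) := by
        rw [← hpre a]; exact ⟨u imin, h1, rfl⟩
      have hmem2 : ℓ (u imax) ∈
          Set.Ico (ℓ a) (ℓ a + Set.ncard {w | T.IsAncestor r a w}) := by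
        rw [← hpre a]; exact ⟨u imax, h2, rfl⟩
      have hj : ℓ (u j) ∈
          Set.Ico (ℓ a) (ℓ a + Set.ncard {w | T.IsAncestor r a w}) :=
        ⟨le_trans hmem1.1 (hmin j), lt_of_le_of_lt (hmax j) hmem2.2⟩
      rw [← hpre a] at hj
      obtain ⟨w, hw, hweq⟩ := hj
      have : w = u j := hbij.injOn (Set.mem_univ _) (Set.mem_univ _) hweq
      rwa [← this]
  refine ⟨key, fun a => ?_⟩
  constructor
  · rintro ⟨h1, h2⟩
    exact ⟨(key a).1 h1, fun b hb1 hb2 => h2 b ((key b).2 ⟨hb1, hb2⟩)⟩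
  · rintro ⟨h1, h2⟩
    exact ⟨(key a).2 h1, fun b hb => h2 b (hb imin) (hb imax)⟩
end

section
/- Let T be a finite tree on n vertices rooted at r with a preorder labeling ℓ, and let (u_1, v_1), ..., (u_k, v_k) (k ≥ 1) be pairs of vertices with ℓ(u_i) ≤ ℓ(v_i) for each i. Let u_min be the vertex among u_1, ..., u_k of minimum label and v_max the vertex among v_1, ..., v_k of maximum label. For each i let w_i be the least common ancestor of u_i and v_i. Then a vertex a is a common ancestor of all of w_1, ..., w_k if and only if a is a common ancestor of u_min and v_max. In particular, the least common ancestor of w_1, ..., w_k equals the least common ancestor of u_min and v_max. -/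
/-- Let `ℓ` be a preorder labeling of a finite rooted tree `T`,
and let `(u i, v i)` for `i = 1, …, k` (`k ≥ 1`) be pairs of vertices with
`ℓ (u i) ≤ ℓ (v i)`, with `w i` the least common ancestor of `u i` and `v i`.
Let `u imin` have minimum label among the `u i` and `v imax` maximum label among
the `v i`.  Then `a` is a common ancestor of all the `w i` iff `a` is a common
ancestor of `u imin` and `v imax`; in particular, the least common ancestor of
`w₁, …, w_k` equals the least common ancestor of `u imin` and `v imax`. -/
theorem lca_of_lcas_eq_lca_min_max {V : Type*} [Fintype V]
    (T : SimpleGraph V) (hT : T.IsTree) (r : V)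
    (ℓ : V → ℕ) (hbij : Set.BijOn ℓ Set.univ (Set.Iio (Fintype.card V)))
    (hpre : ∀ v : V, ℓ '' {u | T.IsAncestor r v u} =
      Set.Ico (ℓ v) (ℓ v + Set.ncard {u | T.IsAncestor r v u}))
    (k : ℕ) (hk : 1 ≤ k) (u v w : Fin k → V)
    (hle : ∀ i : Fin k, ℓ (u i) ≤ ℓ (v i))
    (hw : ∀ i : Fin k,
      T.IsAncestor r (w i) (u i) ∧ T.IsAncestor r (w i) (v i) ∧
      ∀ b : V, T.IsAncestor r b (u i) → T.IsAncestor r b (v i) →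
        T.IsAncestor r b (w i))
    (imin imax : Fin k)
    (hmin : ∀ j : Fin k, ℓ (u imin) ≤ ℓ (u j))
    (hmax : ∀ j : Fin k, ℓ (v j) ≤ ℓ (v imax)) :
    (∀ a : V, (∀ i : Fin k, T.IsAncestor r a (w i)) ↔
      (T.IsAncestor r a (u imin) ∧ T.IsAncestor r a (v imax))) ∧
    (∀ a : V,
      ((∀ i : Fin k, T.IsAncestor r a (w i)) ∧
        ∀ b : V, (∀ i : Fin k, T.IsAncestor r b (w i)) → T.IsAncestor r b a) ↔
      ((T.IsAncestor r a (u imin) ∧ T.IsAncestor r a (v imax)) ∧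
        ∀ b : V, T.IsAncestor r b (u imin) → T.IsAncestor r b (v imax) →
          T.IsAncestor r b a)) := by
  classical
  have inj : Function.Injective ℓ := fun x y h =>
    hbij.injOn (Set.mem_univ x) (Set.mem_univ y) h
  have key : ∀ a x : V, T.IsAncestor r a x ↔
      ℓ x ∈ Set.Ico (ℓ a) (ℓ a + Set.ncard {z | T.IsAncestor r a z}) := by
    intro a x
    constructor
    · intro h
      rw [← hpre a]
      exact ⟨x, h, rfl⟩
    · intro h
      rw [← hpre a] at h
      obtain ⟨y, hy, hyx⟩ := h
      exact inj hyx ▸ hy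
  have trans : ∀ a b c : V, T.IsAncestor r a b → T.IsAncestor r b c →
      T.IsAncestor r a c := by
    intro a b c hab hbc p hp
    have hb : b ∈ p.support := hbc p hp
    have := hab (p.takeUntil b hb) (hp.takeUntil hb)
    exact p.support_takeUntil_subset hb this
  have first : ∀ a : V, (∀ i : Fin k, T.IsAncestor r a (w i)) ↔
      (T.IsAncestor r a (u imin) ∧ T.IsAncestor r a (v imax)) := by
    intro a
    constructor
    · intro h
      exact ⟨trans _ _ _ (h imin) (hw imin).1, trans _ _ _ (h imax) (hw imax).2.1⟩
    · rintro ⟨h1, h2⟩ i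
      have hu := (key a (u imin)).mp h1
      have hv := (key a (v imax)).mp h2
      have hui : T.IsAncestor r a (u i) := (key a (u i)).mpr
        ⟨le_trans hu.1 (hmin i),
         lt_of_le_of_lt (le_trans (hle i) (hmax i)) hv.2⟩
      have hvi : T.IsAncestor r a (v i) := (key a (v i)).mpr
        ⟨le_trans hu.1 (le_trans (hmin i) (hle i)),
         lt_of_le_of_lt (hmax i) hv.2⟩
      exact (hw i).2.2 a hui hvi
  refine ⟨first, fun a => ?_⟩
  constructor
  · rintro ⟨h1, h2⟩
    exact ⟨(first a).mp h1, fun b hb1 hb2 => h2 b ((first b).mpr ⟨hb1, hb2⟩)⟩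
  · rintro ⟨h1, h2⟩
    exact ⟨(first a).mpr h1, fun b hb =>
      h2 b ((first b).mp hb).1 ((first b).mp hb).2⟩
end

section
/- Let G be a finite connected simple graph and T a spanning tree of G. An edge e of G lies on some simple cycle of G if and only if either e is a cross edge (an edge of G not in T), or e is an edge of T lying on the unique path in T between the two endpoints of some cross edge. (Equivalently, the union C of all simple cycles of G equals the union, over all cross edges {u, v}, of {u, v} together with the edges of the T-path from u to v.) -/
/-!
An edge on a cycle is either a cross edge, or a tree edge `ab`, which is a bridge of `T`. In the
second case, removing `ab` splits `T` into two components while `a` and `b` stay connected in `G`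
minus `ab`; that connecting walk has to leave the component of `a` along a cross edge `xy`, and
every `T`-walk from `x` to `y` then uses `ab`. Conversely, a cross edge `uv` closes up the
`T`-path from `u` to `v` into a cycle containing `uv` and every edge of that path.
-/

namespace SimpleGraph

variable {V : Type*} {G H : SimpleGraph V}

lemma Reachable.exists_adj_not_reachable {a b : V} (hH : H.Reachable a b)
    (hG : ¬ G.Reachable a b) :
    ∃ x y, H.Adj x y ∧ G.Reachable a x ∧ ¬ G.Reachable a y := by
  obtain ⟨w⟩ := hH
  obtain ⟨d, -, hx, hy⟩ := w.exists_boundary_dart {z | G.Reachable a z} (Reachable.refl a) hG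
  exact ⟨d.fst, d.snd, d.adj, hx, hy⟩

lemma IsBridge.exists_adj_not_adj_forall_walk_mem_edges {a b : V} (hH : H.IsBridge s(a, b))
    (hG : (G.deleteEdges {s(a, b)}).Reachable a b) :
    ∃ x y, G.Adj x y ∧ ¬ H.Adj x y ∧ ∀ p : H.Walk x y, s(a, b) ∈ p.edges := by
  obtain ⟨x, y, hxy, hax, hay⟩ := hG.exists_adj_not_reachable (isBridge_iff.mp hH)
  rw [deleteEdges_adj] at hxy
  have hxy_not : ¬ (H.deleteEdges {s(a, b)}).Reachable x y := fun h ↦ hay (hax.trans h)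
  refine ⟨x, y, hxy.1, fun hHxy ↦ hxy_not ?_, ?_⟩
  · exact Adj.reachable ((deleteEdges_adj ..).mpr ⟨hHxy, hxy.2⟩)
  · simpa [reachable_deleteEdges_iff_exists_walk] using hxy_not

lemma Walk.IsPath.isCycle_cons_mapLe (hHG : H ≤ G) {u v : V} {p : H.Walk u v} (hp : p.IsPath)
    (h : G.Adj v u) (hH : ¬ H.Adj v u) : (Walk.cons h (p.mapLe hHG)).IsCycle := by
  rw [Walk.cons_isCycle_iff, Walk.edges_mapLe_eq_edges]
  exact ⟨hp.mapLe hHG, fun he ↦ hH (p.adj_of_mem_edges he)⟩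

end SimpleGraph

theorem cycle_edge_iff_cross_or_on_cross_path_general {V : Type*}
    (G T : SimpleGraph V) (hTG : T ≤ G) (hT : T.IsTree)
    (e : Sym2 V) (he : e ∈ G.edgeSet) :
    (∃ (x : V) (c : G.Walk x x), c.IsCycle ∧ e ∈ c.edges) ↔
    (e ∉ T.edgeSet ∨
      (e ∈ T.edgeSet ∧ ∃ u v : V, G.Adj u v ∧ ¬ T.Adj u v ∧
        ∀ p : T.Walk u v, p.IsPath → e ∈ p.edges)) := by
  induction e using Sym2.ind with
  | _ a b =>
  constructor
  · intro hcycle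
    by_cases hTe : s(a, b) ∈ T.edgeSet
    · have hbridge := SimpleGraph.isAcyclic_iff_forall_isBridge.mp hT.isAcyclic hTe
      have hreach := (SimpleGraph.adj_and_reachable_delete_edges_iff_exists_cycle.mpr hcycle).2
      obtain ⟨x, y, hxy, hTxy, hwalk⟩ :=
        hbridge.exists_adj_not_adj_forall_walk_mem_edges hreach
      exact .inr ⟨hTe, x, y, hxy, hTxy, fun p _ ↦ hwalk p⟩
    · exact .inl hTe
  · rintro (hTe | ⟨-, u, v, huv, hTuv, hpath⟩)
    · obtain ⟨p, hp, -⟩ := hT.existsUnique_path a b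
      exact ⟨b, _, hp.isCycle_cons_mapLe hTG (G.adj_symm he) (hTe ∘ T.adj_symm), by simp⟩
    · obtain ⟨p, hp, -⟩ := hT.existsUnique_path u v
      refine ⟨v, _, hp.isCycle_cons_mapLe hTG huv.symm (hTuv ∘ T.adj_symm), ?_⟩
      simp [hpath p hp]

/-- Let `T` be a spanning tree of a finite connected simple
graph `G`.  An edge `e` of `G` lies on some simple cycle of `G` iff either `e`
is a cross edge (an edge of `G` not in `T`), or `e` is an edge of `T` lying on
the unique `T`-path between the endpoints of some cross edge. -/
theorem cycle_edge_iff_cross_or_on_cross_path {V : Type*} [Fintype V]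
    (G T : SimpleGraph V) (hG : G.Connected) (hTG : T ≤ G) (hT : T.IsTree)
    (e : Sym2 V) (he : e ∈ G.edgeSet) :
    (∃ (x : V) (c : G.Walk x x), c.IsCycle ∧ e ∈ c.edges) ↔
    (e ∉ T.edgeSet ∨
      (e ∈ T.edgeSet ∧ ∃ u v : V, G.Adj u v ∧ ¬ T.Adj u v ∧
        ∀ p : T.Walk u v, p.IsPath → e ∈ p.edges)) :=
  cycle_edge_iff_cross_or_on_cross_path_general G T hTG hT e he
end

section
/- Let G be a finite connected simple graph, T a spanning tree of G rooted at a vertex r, and let {u, v} be an edge of T with u the parent of v (u lies on the path in T from r to v). If the edge {u, v} lies on some simple cycle of G, then there exists an edge {a, b} of G not belonging to T with a a descendant of v in T and b not a descendant of v in T. -/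
/-!
Removing the tree edge `{u, v}` separates the descendants of `v` from the other vertices, and
`{u, v}` is the only edge of `T` between the two sides. Since `{u, v}` lies on a cycle of `G`,
the rest of that cycle is a walk from `v` to `u` avoiding `{u, v}`; it has to leave the
descendants of `v` somewhere, and the edge where it does so is not in `T`.
-/

namespace SimpleGraph

variable {V : Type*} {T : SimpleGraph V} {r : V}

theorem IsTree.isAncestor_iff (hT : T.IsTree) {v x : V} {p : T.Walk r x} (hp : p.IsPath) :
    T.IsAncestor r v x ↔ v ∈ p.support :=
  ⟨fun h => h p hp, fun h q hq => by rwa [(hT.existsUnique_path r x).unique hq hp]⟩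

theorem isAncestor_self (v : V) : T.IsAncestor r v v := fun p _ => p.end_mem_support

theorem IsTree.not_isAncestor_of_adj_of_isAncestor (hT : T.IsTree) {u v : V} (huv : T.Adj u v)
    (hu : T.IsAncestor r u v) : ¬ T.IsAncestor r v u := by
  obtain ⟨p, hp, -⟩ := hT.existsUnique_path r v
  obtain ⟨q, hq, -⟩ := hT.existsUnique_path r u
  rw [hT.isAncestor_iff hq]
  exact hT.isAcyclic.ne_mem_support_of_support_of_adj_of_isPath hp hq huv.symm (hu p hp)

theorem IsTree.eq_of_adj_of_isAncestor (hT : T.IsTree) {u w v : V} (huv : T.Adj u v)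
    (hwv : T.Adj w v) (hu : T.IsAncestor r u v) (hw : T.IsAncestor r w v) : u = w := by
  obtain ⟨p, hp, -⟩ := hT.existsUnique_path r v
  rw [hT.isAcyclic.eq_penultimate_of_adj_end hp huv.symm (hu p hp),
    hT.isAcyclic.eq_penultimate_of_adj_end hp hwv.symm (hw p hp)]

/-- The only tree edge leaving the descendants of `v` joins `v` to its parent. -/
theorem IsTree.eq_and_isAncestor_of_adj_of_isAncestor_of_not_isAncestor (hT : T.IsTree)
    {v a b : V} (hab : T.Adj a b) (ha : T.IsAncestor r v a) (hb : ¬ T.IsAncestor r v b) :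
    a = v ∧ T.IsAncestor r b a := by
  obtain ⟨p, hp, -⟩ := hT.existsUnique_path r a
  obtain ⟨q, hq, -⟩ := hT.existsUnique_path r b
  rw [hT.isAncestor_iff hp] at ha
  rw [hT.isAncestor_iff hq] at hb
  have haq : a ∉ q.support := fun haq => by
    rw [hT.isAcyclic.path_concat hp hq hab haq] at hb
    exact hb (p.support_subset_support_concat hab ha)
  have hbp : b ∈ p.support :=
    hT.isAcyclic.mem_support_of_ne_mem_support_of_adj_of_isPath hp hq hab haq
  refine ⟨?_, (hT.isAncestor_iff hp).2 hbp⟩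
  rw [hT.isAcyclic.path_concat hq hp hab.symm hbp, Walk.support_concat, List.mem_append,
    List.mem_singleton] at ha
  exact (ha.resolve_left hb).symm

end SimpleGraph

open SimpleGraph in
theorem cycle_tree_edge_has_spanning_cross_edge_general {V : Type*}
    (G T : SimpleGraph V) (hT : T.IsTree)
    (r u v : V) (huv : T.Adj u v) (hparent : T.IsAncestor r u v)
    (hcyc : ∃ (x : V) (c : G.Walk x x), c.IsCycle ∧ s(u, v) ∈ c.edges) :
    ∃ a b : V, G.Adj a b ∧ ¬ T.Adj a b ∧
      T.IsAncestor r v a ∧ ¬ T.IsAncestor r v b := by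
  obtain ⟨-, hreach⟩ := adj_and_reachable_delete_edges_iff_exists_cycle.mpr hcyc
  obtain ⟨p, hp⟩ := reachable_deleteEdges_iff_exists_walk.mp hreach.symm
  obtain ⟨d, hd, hda, hdb⟩ := p.exists_boundary_dart {x | T.IsAncestor r v x}
    (isAncestor_self v) (hT.not_isAncestor_of_adj_of_isAncestor huv hparent)
  refine ⟨d.fst, d.snd, d.adj, fun hTab => hp ?_, hda, hdb⟩
  obtain ⟨rfl, hb⟩ := hT.eq_and_isAncestor_of_adj_of_isAncestor_of_not_isAncestor hTab hda hdb
  obtain rfl := hT.eq_of_adj_of_isAncestor huv hTab.symm hparent hb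
  rw [Sym2.eq_swap]
  exact List.mem_map_of_mem hd

/-- Let `T` be a spanning tree of a finite connected simple
graph `G`, rooted at `r`, and let `{u, v}` be an edge of `T` with `u` the parent
of `v` (i.e. `u` lies on the `T`-path from `r` to `v`).  If the edge `{u, v}`
lies on some simple cycle of `G`, then there is an edge `{a, b}` of `G` not in
`T` with `a` a descendant of `v` and `b` not a descendant of `v`. -/
theorem cycle_tree_edge_has_spanning_cross_edge {V : Type*} [Fintype V]
    (G T : SimpleGraph V) (hG : G.Connected) (hTG : T ≤ G) (hT : T.IsTree)
    (r u v : V) (huv : T.Adj u v) (hparent : T.IsAncestor r u v)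
    (hcyc : ∃ (x : V) (c : G.Walk x x), c.IsCycle ∧ s(u, v) ∈ c.edges) :
    ∃ a b : V, G.Adj a b ∧ ¬ T.Adj a b ∧
      T.IsAncestor r v a ∧ ¬ T.IsAncestor r v b :=
  cycle_tree_edge_has_spanning_cross_edge_general G T hT r u v huv hparent hcyc
end

section
/- Let G be a finite connected simple graph with no bridges. Define the relation ∼_D on the edge set of G by: x ∼_D y if and only if x = y, or the graph G − x − y obtained by deleting both edges x and y is disconnected. Then ∼_D is an equivalence relation on the edges of G. -/
section Aux

variable {V : Type*}

/-- In a connected graph, any nonempty proper vertex set has a crossing edge. -/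
private lemma aux_cross_of_connected (H : SimpleGraph V) (hH : H.Connected)
    (A : Set V) (ha : A.Nonempty) (hac : Aᶜ.Nonempty) :
    ∃ u v, H.Adj u v ∧ u ∈ A ∧ v ∉ A := by
  obtain ⟨u, hu⟩ := ha
  obtain ⟨w, hw⟩ := hac
  obtain ⟨p⟩ := hH u w
  obtain ⟨d, _, h1, h2⟩ := p.exists_boundary_dart A hu hw
  exact ⟨d.fst, d.snd, d.adj, h1, h2⟩

/-- From a disconnected graph (on a nonempty vertex type) extract a nonempty proper
vertex set closed under adjacency. -/
private lemma aux_set_of_disconnected (H : SimpleGraph V) [Nonempty V]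
    (h : ¬H.Connected) :
    ∃ A : Set V, A.Nonempty ∧ Aᶜ.Nonempty ∧ ∀ u v, H.Adj u v → u ∈ A → v ∈ A := by
  have h' : ¬H.Preconnected := fun hp => h ⟨hp⟩
  have h'' : ¬∀ u v, H.Reachable u v := h'
  push_neg at h''
  obtain ⟨u, v, huv⟩ := h''
  refine ⟨{w | H.Reachable u w}, ⟨u, by simp [SimpleGraph.Reachable.refl]⟩, ⟨v, huv⟩,
    fun a b hab ha => ?_⟩
  exact ha.trans hab.reachable

/-- Crossing-edge extraction for a 2-edge-cut: if `G − e − f` is disconnected in a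
connected bridgeless graph, there is a nonempty proper set `A` such that every
`G`-edge crossing `A` is `e` or `f`, and both `e` and `f` cross `A`. -/
private lemma aux_cut2 [Fintype V] (G : SimpleGraph V) (hG : G.Connected)
    (hbridgeless : ∀ e ∈ G.edgeSet, (G.deleteEdges {e}).Connected)
    (e f : Sym2 V) (he : e ∈ G.edgeSet) (hf : f ∈ G.edgeSet)
    (hdis : ¬(G.deleteEdges {e, f}).Connected) :
    ∃ A : Set V, A.Nonempty ∧ Aᶜ.Nonempty ∧
      (∀ u v, G.Adj u v → u ∈ A → v ∉ A → s(u, v) = e ∨ s(u, v) = f) ∧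
      (∃ u v, e = s(u, v) ∧ u ∈ A ∧ v ∉ A) ∧
      (∃ u v, f = s(u, v) ∧ u ∈ A ∧ v ∉ A) := by
  have : Nonempty V := hG.nonempty
  obtain ⟨A, hA, hAc, hclosed⟩ := aux_set_of_disconnected _ hdis
  have hbound : ∀ u v, G.Adj u v → u ∈ A → v ∉ A → s(u, v) = e ∨ s(u, v) = f := by
    intro u v huv hu hv
    by_contra hcon
    push_neg at hcon
    exact hv (hclosed u v (by simp [huv, hcon.1, hcon.2]) hu)
  refine ⟨A, hA, hAc, hbound, ?_, ?_⟩
  · by_contra hcon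
    push_neg at hcon
    -- every crossing edge is f, so G − f is disconnected, contradiction
    have hconn := hbridgeless f hf
    obtain ⟨u, v, huv, hu, hv⟩ := aux_cross_of_connected _ hconn A hA hAc
    have huv' : G.Adj u v := (SimpleGraph.deleteEdges_adj.mp huv).1
    have hne : s(u, v) ≠ f := by
      intro h; exact (SimpleGraph.deleteEdges_adj.mp huv).2 (by simp [h])
    rcases hbound u v huv' hu hv with h | h
    · exact hv (hcon u v h.symm hu)
    · exact hne h
  · by_contra hcon
    push_neg at hcon
    have hconn := hbridgeless e he
    obtain ⟨u, v, huv, hu, hv⟩ := aux_cross_of_connected _ hconn A hA hAc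
    have huv' : G.Adj u v := (SimpleGraph.deleteEdges_adj.mp huv).1
    have hne : s(u, v) ≠ e := by
      intro h; exact (SimpleGraph.deleteEdges_adj.mp huv).2 (by simp [h])
    rcases hbound u v huv' hu hv with h | h
    · exact hne h
    · exact hv (hcon u v h.symm hu)

end Aux

/-- Let `G` be a finite connected simple graph with no bridges
(deleting any single edge leaves `G` connected).  The relation `∼_D` on the
edges of `G`, defined by `x ∼_D y` iff `x = y` or `G − x − y` is disconnected,
is an equivalence relation. -/
theorem double_deletion_equivalence {V : Type*} [Fintype V]
    (G : SimpleGraph V) (hG : G.Connected)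
    (hbridgeless : ∀ e ∈ G.edgeSet, (G.deleteEdges {e}).Connected) :
    Equivalence (fun x y : G.edgeSet =>
      x = y ∨ ¬(G.deleteEdges {(x : Sym2 V), (y : Sym2 V)}).Connected) := by
  constructor
  · intro x; exact Or.inl rfl
  · rintro x y (rfl | h)
    · exact Or.inl rfl
    · right; rwa [Set.pair_comm]
  · rintro x y z hxy hyz
    rcases hxy with rfl | hxy
    · exact hyz
    rcases hyz with rfl | hyz
    · exact Or.inr hxy
    by_cases hxz : x = z
    · exact Or.inl hxz
    right
    -- all three edges distinct as elements of Sym2 V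
    have hxy' : (x : Sym2 V) ≠ y := by
      intro h
      rw [h, Set.pair_eq_singleton] at hxy
      exact hxy (hbridgeless y y.2)
    have hyz' : (y : Sym2 V) ≠ z := by
      intro h
      rw [h, Set.pair_eq_singleton] at hyz
      exact hyz (hbridgeless z z.2)
    have hxz' : (x : Sym2 V) ≠ z := fun h => hxz (Subtype.ext h)
    obtain ⟨A, hA, hAc, hAbd, ⟨p, q, hxpq, hp, hq⟩, ⟨a, b, hyab, ha, hb⟩⟩ :=
      aux_cut2 G hG hbridgeless x y x.2 y.2 hxy
    obtain ⟨C₀, hC₀, hC₀c, hC₀bd, ⟨c, d, hycd, hc, hd⟩, hzC₀⟩ :=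
      aux_cut2 G hG hbridgeless y z y.2 z.2 hyz
    -- orient C so that a ∈ C and b ∉ C
    have hkey : ∃ C : Set V,
        (∀ u v, G.Adj u v → u ∈ C → v ∉ C → s(u, v) = (y : Sym2 V) ∨ s(u, v) = z) ∧
        a ∈ C ∧ b ∉ C := by
      have hcases : (a = c ∧ b = d) ∨ (a = d ∧ b = c) := by
        have := hyab.symm.trans hycd
        rwa [Sym2.eq_iff] at this
      rcases hcases with ⟨rfl, rfl⟩ | ⟨rfl, rfl⟩
      · exact ⟨C₀, hC₀bd, hc, hd⟩
      · refine ⟨C₀ᶜ, fun u v huv hu hv => ?_, hd, by simpa using hc⟩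
        have := hC₀bd v u huv.symm (by simpa using hv) hu
        rwa [Sym2.eq_swap] at this
    obtain ⟨C, hCbd, haC, hbC⟩ := hkey
    -- crossing edges of C are also only y or z (true by construction)
    set D : Set V := (A \ C) ∪ (C \ A) with hD
    -- A ≠ C and A ≠ Cᶜ since x crosses A but x is not y or z
    have hAx : G.Adj p q := by
      have := x.2; rw [hxpq] at this; exact this
    have hneAC : A ≠ C := by
      intro h
      subst h
      rcases hCbd p q hAx hp hq with h' | h'
      · exact hxy' (hxpq.trans h')
      · exact hxz' (hxpq.trans h')
    have hneACc : A ≠ Cᶜ := by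
      intro h
      have hqC : q ∈ C := by
        by_contra hqC
        exact hq (h ▸ hqC)
      have hpC : p ∉ C := by
        have : p ∈ Cᶜ := h ▸ hp
        simpa using this
      rcases hCbd q p hAx.symm hqC hpC with h' | h'
      · exact hxy' (by rw [hxpq, Sym2.eq_swap]; exact h')
      · exact hxz' (by rw [hxpq, Sym2.eq_swap]; exact h')
    -- D is nonempty and coproper
    have hDne : D.Nonempty := by
      rw [Set.union_nonempty]
      by_contra hcon
      push_neg at hcon
      simp only [Set.not_nonempty_iff_eq_empty, Set.diff_eq_empty] at hcon
      exact hneAC (le_antisymm hcon.1 hcon.2)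
    have hDcne : Dᶜ.Nonempty := by
      by_contra hcon
      rw [Set.not_nonempty_iff_eq_empty, ← Set.compl_univ, compl_inj_iff] at hcon
      apply hneACc
      ext w
      constructor
      · intro hw hwC
        have : w ∈ D := hcon ▸ Set.mem_univ w
        rcases this with h' | h'
        · exact h'.2 hwC
        · exact h'.2 hw
      · intro hw
        have : w ∈ D := hcon ▸ Set.mem_univ w
        rcases this with h' | h'
        · exact h'.1
        · exact absurd h'.1 hw
    -- no edge of G − x − z crosses D
    intro hconn
    obtain ⟨u, v, huv, hu, hv⟩ := aux_cross_of_connected _ hconn D hDne hDcne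
    obtain ⟨huv', hnot⟩ := SimpleGraph.deleteEdges_adj.mp huv
    have hnx : s(u, v) ≠ (x : Sym2 V) := fun h => hnot (by simp [h])
    have hnz : s(u, v) ≠ (z : Sym2 V) := fun h => hnot (by simp [h])
    have hvAC : (v ∈ A ↔ v ∈ C) := by
      constructor
      · intro h1
        by_contra h2
        exact hv (Or.inl ⟨h1, h2⟩)
      · intro h1
        by_contra h2
        exact hv (Or.inr ⟨h1, h2⟩)
    -- the crossing edge must be y
    have hy : s(u, v) = (y : Sym2 V) := by
      rcases hu with ⟨huA, huC⟩ | ⟨huC, huA⟩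
      · by_cases hvA : v ∈ A
        · -- v ∈ A ∩ C, u ∉ C : crosses C
          have hvC : v ∈ C := hvAC.mp hvA
          have := hCbd v u huv'.symm hvC huC
          rcases this with h' | h'
          · rwa [Sym2.eq_swap] at h'
          · exact absurd (Sym2.eq_swap.trans h' :) hnz
        · rcases hAbd u v huv' huA hvA with h' | h'
          · exact absurd h' hnx
          · exact h'
      · by_cases hvA : v ∈ A
        · have := hAbd v u huv'.symm hvA huA
          rcases this with h' | h'
          · exact absurd (Sym2.eq_swap.trans h' :) hnx
          · rwa [Sym2.eq_swap] at h'
        · have hvC : v ∉ C := fun h => hvA (hvAC.mpr h)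
          rcases hCbd u v huv' huC hvC with h' | h'
          · exact h'
          · exact absurd h' hnz
    -- but y = s(a,b) with a ∈ A ∩ C and b ∉ A ∪ C, so y does not cross D
    have : (u = a ∧ v = b) ∨ (u = b ∧ v = a) := by
      have := hy.trans hyab
      rwa [Sym2.eq_iff] at this
    have haD : a ∉ D := fun h => by
      rcases h with h' | h'
      · exact h'.2 haC
      · exact h'.2 ha
    have hbD : b ∉ D := fun h => by
      rcases h with h' | h'
      · exact hb h'.1
      · exact hbC h'.1
    rcases this with ⟨rfl, rfl⟩ | ⟨rfl, rfl⟩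
    · exact haD hu
    · exact hbD hu
end

section
/- Let G be a finite simple graph, let u and v be vertices, and let P and P' be two paths in G from u to v. If an edge e of G belongs to exactly one of P and P' (i.e., e lies in their symmetric difference), then e lies on a simple cycle of G. -/
open SimpleGraph

private lemma split_at_edge {V : Type*} (G : SimpleGraph V) {u v a b : V}
    (p : G.Walk u v) (hnd : p.edges.Nodup) (he : s(a, b) ∈ p.edges) :
    (∃ (q : G.Walk u a) (r : G.Walk b v),
        s(a, b) ∉ q.edges ∧ s(a, b) ∉ r.edges) ∨
    (∃ (q : G.Walk u b) (r : G.Walk a v),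
        s(a, b) ∉ q.edges ∧ s(a, b) ∉ r.edges) := by
  induction p with
  | nil => simp at he
  | @cons x y z hadj q ih =>
    rw [SimpleGraph.Walk.edges_cons, List.nodup_cons] at hnd
    obtain ⟨hne, hnd'⟩ := hnd
    rw [SimpleGraph.Walk.edges_cons, List.mem_cons] at he
    rcases he with he | he
    · rw [Sym2.eq_iff] at he
      rcases he with ⟨ha, hb⟩ | ⟨ha, hb⟩
      · subst ha; subst hb
        left
        refine ⟨SimpleGraph.Walk.nil, q, by simp, ?_⟩
        exact hne
      · subst ha; subst hb
        right
        refine ⟨SimpleGraph.Walk.nil, q, by simp, ?_⟩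
        rw [Sym2.eq_swap]; exact hne
    · have hne' : s(a, b) ≠ s(x, y) := by
        intro h'; rw [h'] at he; exact hne he
      rcases ih hnd' he with ⟨q₁, r₁, hq₁, hr₁⟩ | ⟨q₁, r₁, hq₁, hr₁⟩
      · left
        refine ⟨SimpleGraph.Walk.cons hadj q₁, r₁, ?_, hr₁⟩
        rw [SimpleGraph.Walk.edges_cons, List.mem_cons]
        rintro (h' | h')
        · exact hne' h'
        · exact hq₁ h'
      · right
        refine ⟨SimpleGraph.Walk.cons hadj q₁, r₁, ?_, hr₁⟩
        rw [SimpleGraph.Walk.edges_cons, List.mem_cons]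
        rintro (h' | h')
        · exact hne' h'
        · exact hq₁ h'

private lemma main_aux {V : Type*} (G : SimpleGraph V) {u v : V}
    (p p' : G.Walk u v) (hp : p.IsPath) (e : Sym2 V)
    (hep : e ∈ p.edges) (hep' : e ∉ p'.edges) :
    ∃ (x : V) (c : G.Walk x x), c.IsCycle ∧ e ∈ c.edges := by
  induction e with
  | h a b =>
    have hadj : G.Adj a b := p.adj_of_mem_edges hep
    rcases split_at_edge G p hp.isTrail.edges_nodup hep with
      ⟨q, r, hq, hr⟩ | ⟨q, r, hq, hr⟩
    · obtain ⟨w, c, hc, hec⟩ := (G.adj_and_reachable_delete_edges_iff_exists_cycle).mp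
        ⟨hadj, by
          have w1 : (G.deleteEdges {s(a,b)}).Walk a u :=
            (q.toDeleteEdges {s(a,b)} (fun e' h' h'' => by
              simp only [Set.mem_singleton_iff] at h''; exact hq (h'' ▸ h'))).reverse
          have w2 : (G.deleteEdges {s(a,b)}).Walk u v :=
            p'.toDeleteEdges {s(a,b)} (fun e' h' h'' => by
              simp only [Set.mem_singleton_iff] at h''; exact hep' (h'' ▸ h'))
          have w3 : (G.deleteEdges {s(a,b)}).Walk v b :=
            (r.toDeleteEdges {s(a,b)} (fun e' h' h'' => by
              simp only [Set.mem_singleton_iff] at h''; exact hr (h'' ▸ h'))).reverse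
          exact ⟨(w1.append w2).append w3⟩⟩
      exact ⟨w, c, hc, hec⟩
    · obtain ⟨w, c, hc, hec⟩ := (G.adj_and_reachable_delete_edges_iff_exists_cycle).mp
        ⟨hadj.symm, by
          have w1 : (G.deleteEdges {s(b,a)}).Walk b u :=
            (q.toDeleteEdges {s(b,a)} (fun e' h' h'' => by
              simp only [Set.mem_singleton_iff] at h''
              exact hq (by rw [h''] at h'; rwa [Sym2.eq_swap] at h'))).reverse
          have w2 : (G.deleteEdges {s(b,a)}).Walk u v :=
            p'.toDeleteEdges {s(b,a)} (fun e' h' h'' => by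
              simp only [Set.mem_singleton_iff] at h''
              exact hep' (by rw [h''] at h'; rwa [Sym2.eq_swap] at h'))
          have w3 : (G.deleteEdges {s(b,a)}).Walk v a :=
            (r.toDeleteEdges {s(b,a)} (fun e' h' h'' => by
              simp only [Set.mem_singleton_iff] at h''
              exact hr (by rw [h''] at h'; rwa [Sym2.eq_swap] at h'))).reverse
          exact ⟨(w1.append w2).append w3⟩⟩
      refine ⟨w, c, hc, ?_⟩
      rw [Sym2.eq_swap]; exact hec

/-- Let `p` and `p'` be two paths from `u` to `v` in a finite
simple graph `G`.  Any edge belonging to exactly one of `p` and `p'` (an edge of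
their symmetric difference) lies on a simple cycle of `G`. -/
theorem symmDiff_edge_on_cycle {V : Type*} [Fintype V]
    (G : SimpleGraph V) (u v : V)
    (p p' : G.Walk u v) (hp : p.IsPath) (hp' : p'.IsPath) (e : Sym2 V)
    (he : (e ∈ p.edges ∧ e ∉ p'.edges) ∨ (e ∈ p'.edges ∧ e ∉ p.edges)) :
    ∃ (x : V) (c : G.Walk x x), c.IsCycle ∧ e ∈ c.edges := by
  rcases he with ⟨h1, h2⟩ | ⟨h1, h2⟩
  · exact main_aux G p p' hp e h1 h2
  · exact main_aux G p' p hp' e h1 h2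
end
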